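/- arXiv:2107.08847 — 3 statements merged into one kernel-verified Lean document; each statement's English description precedes it below -/
import Mathlib

section
/- If f: ℝⁿ → ℝ is a strictly increasing transformation of a nontrivial linear function, then for all x ∈ ℝⁿ, the selection function α_f(x, ·) does not depend on x and is positively homogeneous of degree 1: for all x ∈ ℝⁿ, σ > 0 and u ∈ ℝ^{nλ}, α_f(x, σu) = σ·α_f(0, u). -/
/-- The selection function `α_f`: the first `μ` of the `uⁱ` sorted by the values
`f (z + uⁱ)`, ties broken by smaller original index. -/
noncomputable def selAlpha (n lam mu : ℕ) (hmu : mu ≤ lam) (h : (Fin n → ℝ) → ℝ)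
    (z : Fin n → ℝ) (u : Fin lam → (Fin n → ℝ)) : Fin mu → (Fin n → ℝ) :=
  fun i => u (Tuple.sort (fun j => h (z + u j)) (Fin.castLE hmu i))

lemma sort_comp_strictMono {m : ℕ} (g : Fin m → ℝ) (ψ : ℝ → ℝ) (hψ : StrictMono ψ) :
    Tuple.sort (fun j => ψ (g j)) = Tuple.sort g := by
  symm
  rw [Tuple.eq_sort_iff]
  obtain ⟨h1, h2⟩ := Tuple.eq_sort_iff.1 (rfl : Tuple.sort g = Tuple.sort g)
  exact ⟨fun i j hij => hψ.monotone (h1 hij),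
    fun i j hij he => h2 i j hij (hψ.injective he)⟩

/-- If `f` is a strictly increasing transformation of a nontrivial linear function,
then `α_f (x, ·)` does not depend on `x` and is positively homogeneous of degree 1:
`α_f (x, σ u) = σ • α_f (0, u)`. -/
theorem selAlpha_linear (n lam mu : ℕ) (hmu : mu ≤ lam)
    (ℓ : (Fin n → ℝ) →ₗ[ℝ] ℝ) (hℓ : ℓ ≠ 0) (φ : ℝ → ℝ) (hφ : StrictMono φ)
    (f : (Fin n → ℝ) → ℝ) (hf : f = φ ∘ ℓ) :
    ∀ (x : Fin n → ℝ) (σ : ℝ), 0 < σ → ∀ u : Fin lam → (Fin n → ℝ),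
      selAlpha n lam mu hmu f x (fun j => σ • u j)
        = fun i => σ • selAlpha n lam mu hmu f 0 u i := by
  intro x σ hσ u
  have hψ : StrictMono (fun t => φ (ℓ x + σ * t)) :=
    hφ.comp fun a b hab => by nlinarith
  have h1 : (fun j => f (x + σ • u j)) = fun j => (fun t => φ (ℓ x + σ * t)) (ℓ (u j)) := by
    funext j; simp [hf, map_add, map_smul, smul_eq_mul]
  have h2 : (fun j => f (0 + u j)) = fun j => φ (ℓ (u j)) := by
    funext j; simp [hf]
  funext i
  simp only [selAlpha, h1, h2, sort_comp_strictMono _ _ hψ, sort_comp_strictMono _ _ hφ]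
end

section
/- Let f: ℝⁿ → ℝ be scaling-invariant with respect to x*. Define, for k ∈ ℕ, X_{k+1} = X_k + ∑_{i=1}^μ w_i [α_f(X_k, σ_k U_{k+1})]_i and σ_{k+1} = σ_k Γ(α_f(X_k, σ_k U_{k+1})/σ_k), with σ_0 > 0. Then the normalized process Z_k = (X_k − x*)/σ_k satisfies the recursion Z_{k+1} = (Z_k + ∑_{i=1}^μ w_i [α_f(x* + Z_k, U_{k+1})]_i) / Γ(α_f(x* + Z_k, U_{k+1})). -/
open scoped BigOperators

lemma sort_congr {m : ℕ} {f g : Fin m → ℝ} (h : ∀ i j, f i ≤ f j ↔ g i ≤ g j) :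
    Tuple.sort f = Tuple.sort g := by
  have key : ∀ i j, f i = f j ↔ g i = g j := by
    intro i j
    simp [le_antisymm_iff, h i j, h j i]
  symm
  rw [Tuple.eq_sort_iff]
  obtain ⟨h1, h2⟩ := Tuple.eq_sort_iff.1 (rfl : Tuple.sort g = Tuple.sort g)
  constructor
  · intro i j hij
    exact (h _ _).2 (h1 hij)
  · intro i j hij hf
    exact h2 i j hij ((key _ _).1 hf)

/-- For a scaling-invariant `f`, the normalized process `Z_k = (X_k − x*)/σ_k` of
the step-size adaptive `(μ/μ_w, λ)`-ES satisfies the autonomous recursion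
`Z_{k+1} = (Z_k + ∑ᵢ wᵢ [α_f(x* + Z_k, U_{k+1})]ᵢ) / Γ(α_f(x* + Z_k, U_{k+1}))`. -/
theorem normalized_chain_recursion (n lam mu : ℕ) (hmu : mu ≤ lam)
    (f : (Fin n → ℝ) → ℝ) (xstar : Fin n → ℝ)
    (hsi : ∀ ρ : ℝ, 0 < ρ → ∀ x y : Fin n → ℝ,
      (f (xstar + x) ≤ f (xstar + y) ↔ f (xstar + ρ • x) ≤ f (xstar + ρ • y)))
    (w : Fin mu → ℝ) (hw : w ≠ 0)
    (Γ : (Fin mu → (Fin n → ℝ)) → ℝ) (hΓpos : ∀ v, 0 < Γ v)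
    (X : ℕ → Fin n → ℝ) (σ : ℕ → ℝ) (U : ℕ → Fin lam → Fin n → ℝ)
    (hσ0 : 0 < σ 0)
    (hX : ∀ k, X (k + 1) = X k +
      ∑ i, w i • selAlpha n lam mu hmu f (X k) (fun j => σ k • U (k + 1) j) i)
    (hσ : ∀ k, σ (k + 1) = σ k *
      Γ (fun i => (σ k)⁻¹ • selAlpha n lam mu hmu f (X k) (fun j => σ k • U (k + 1) j) i)) :
    ∀ k, (σ (k + 1))⁻¹ • (X (k + 1) - xstar) =
      (Γ (selAlpha n lam mu hmu f (xstar + (σ k)⁻¹ • (X k - xstar)) (U (k + 1))))⁻¹ •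
        ((σ k)⁻¹ • (X k - xstar) +
          ∑ i, w i • selAlpha n lam mu hmu f (xstar + (σ k)⁻¹ • (X k - xstar)) (U (k + 1)) i) := by
  have hσpos : ∀ k, 0 < σ k := by
    intro k
    induction k with
    | zero => exact hσ0
    | succ k ih => rw [hσ k]; exact mul_pos ih (hΓpos _)
  intro k
  set s := σ k with hs
  have hspos : 0 < s := hσpos k
  have hsne : s ≠ 0 := hspos.ne'
  set z : Fin n → ℝ := s⁻¹ • (X k - xstar) with hz
  have hXk : X k = xstar + s • z := by
    rw [hz, smul_inv_smul₀ hsne]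
    abel
  -- the sorted permutations coincide
  have hsel : ∀ i, selAlpha n lam mu hmu f (X k) (fun j => s • U (k + 1) j) i
      = s • selAlpha n lam mu hmu f (xstar + z) (U (k + 1)) i := by
    have hsort : Tuple.sort (fun j => f (X k + (fun j => s • U (k + 1) j) j))
        = Tuple.sort (fun j => f (xstar + z + U (k + 1) j)) := by
      apply sort_congr
      intro i j
      have hi : X k + s • U (k + 1) i = xstar + s • (z + U (k + 1) i) := by
        rw [hXk, smul_add]; abel
      have hj : X k + s • U (k + 1) j = xstar + s • (z + U (k + 1) j) := by
        rw [hXk, smul_add]; abel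
      have hi' : xstar + z + U (k + 1) i = xstar + (z + U (k + 1) i) := by abel
      have hj' : xstar + z + U (k + 1) j = xstar + (z + U (k + 1) j) := by abel
      rw [hi, hj, hi', hj']
      exact (hsi s hspos _ _).symm
    intro i
    simp only [selAlpha, hsort]
  have hΓarg : (fun i => s⁻¹ • selAlpha n lam mu hmu f (X k) (fun j => s • U (k + 1) j) i)
      = selAlpha n lam mu hmu f (xstar + z) (U (k + 1)) := by
    funext i
    rw [hsel i, inv_smul_smul₀ hsne]
  rw [hX k, hσ k, ← hs, hΓarg, mul_inv, mul_comm]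
  rw [mul_smul]
  congr 1
  have hsum : ∑ i, w i • selAlpha n lam mu hmu f (X k) (fun j => s • U (k + 1) j) i
      = s • ∑ i, w i • selAlpha n lam mu hmu f (xstar + z) (U (k + 1)) i := by
    rw [Finset.smul_sum]
    refine Finset.sum_congr rfl fun i _ => ?_
    rw [hsel i, smul_comm]
  rw [hsum]
  rw [add_sub_right_comm, smul_add, smul_smul, inv_mul_cancel₀ hsne, one_smul]
end

section
/- Let m_Γ > 0, let Γ: ℝ^{nμ} → [m_Γ, ∞) be continuous, w ∈ ℝ^μ nonzero, and let for each z ∈ ℝⁿ \ {0} a random vector A(z) ∈ ℝ^{nμ} be given with ‖∑_{i=1}^μ w_i A(z)_i‖ ≤ ‖w‖·‖U‖ almost surely for a fixed integrable random variable ‖U‖ ≥ 0. Set Z₁(z) = (z + ∑_i w_i A(z)_i)/Γ(A(z)). Then for every α > 0, E[‖Z₁(z)‖^α]/‖z‖^α − E[1/Γ(A(z))^α] → 0 as ‖z‖ → ∞. -/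
/-!
Write `r = ‖z‖` and `S = ∑ i, w i • A z i`. Since `‖S‖ ≤ ‖w‖ U`, the ratio `‖z + S‖ / r` lies
within `t = ‖w‖ U / r` of `1`, hence `|(‖z + S‖ / r) ^ α - 1| ≤ (1 + t) ^ α - max 0 (1 - t) ^ α`.
Together with `Γ ^ (-α) ≤ m_Γ ^ (-α)` this bounds the difference of expectations by
`m_Γ ^ (-α)` times the expectation of that spread, which tends to `0` as `r → ∞` by dominated
convergence, with dominating function `(1 + ‖w‖ U) ^ α` once `r ≥ 1`.
-/

open MeasureTheory Filter Topology

/-- The length of the image of `[1 - t, 1 + t] ∩ [0, ∞)` under `x ↦ x ^ α` when `0 ≤ α`. -/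
noncomputable def rpowSpread (α t : ℝ) : ℝ := (1 + t) ^ α - max 0 (1 - t) ^ α

theorem measurable_rpowSpread (α : ℝ) : Measurable (rpowSpread α) := by
  unfold rpowSpread; fun_prop

theorem rpowSpread_nonneg {α t : ℝ} (hα : 0 ≤ α) (ht : 0 ≤ t) : 0 ≤ rpowSpread α t :=
  sub_nonneg.2 <| Real.rpow_le_rpow (le_max_left _ _) (max_le (by linarith) (by linarith)) hα

theorem rpowSpread_le (α t : ℝ) : rpowSpread α t ≤ (1 + t) ^ α :=
  sub_le_self _ (Real.rpow_nonneg (le_max_left _ _) _)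

theorem norm_rpowSpread_div_le {α x r : ℝ} (hα : 0 ≤ α) (hx : 0 ≤ x) (hr : 1 ≤ r) :
    ‖rpowSpread α (x / r)‖ ≤ (1 + x) ^ α := by
  have hxr : x / r ≤ x := div_le_self hx hr
  have hxr0 : 0 ≤ x / r := div_nonneg hx (by linarith)
  rw [Real.norm_of_nonneg (rpowSpread_nonneg hα hxr0)]
  exact (rpowSpread_le α _).trans (Real.rpow_le_rpow (by linarith) (by linarith) hα)

theorem tendsto_rpowSpread_zero (α : ℝ) : Tendsto (rpowSpread α) (𝓝 0) (𝓝 0) := by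
  have h : ContinuousAt (rpowSpread α) 0 :=
    ((continuousAt_const.add continuousAt_id).rpow_const (by simp)).sub
      ((continuousAt_const.max (continuousAt_const.sub continuousAt_id)).rpow_const (by simp))
  simpa [rpowSpread] using h.tendsto

theorem abs_rpow_sub_one_le_rpowSpread {α s t : ℝ} (hα : 0 ≤ α) (hs : 0 ≤ s)
    (hst : |s - 1| ≤ t) : |s ^ α - 1| ≤ rpowSpread α t := by
  obtain ⟨hlo, hhi⟩ := abs_sub_le_iff.1 hst
  have ht : 0 ≤ t := (abs_nonneg _).trans hst
  have hup : s ^ α ≤ (1 + t) ^ α := Real.rpow_le_rpow hs (by linarith) hα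
  have hdown : max 0 (1 - t) ^ α ≤ s ^ α :=
    Real.rpow_le_rpow (le_max_left _ _) (max_le hs (by linarith)) hα
  have hone_le : 1 ≤ (1 + t) ^ α := Real.one_le_rpow (by linarith) hα
  have hle_one : max 0 (1 - t) ^ α ≤ 1 :=
    Real.rpow_le_one (le_max_left _ _) (max_le zero_le_one (by linarith)) hα
  rw [rpowSpread, abs_sub_le_iff]
  constructor <;> linarith

theorem abs_norm_add_div_norm_sub_one_le {E : Type*} [SeminormedAddCommGroup E] {z : E}
    (hz : 0 < ‖z‖) (s : E) : |‖z + s‖ / ‖z‖ - 1| ≤ ‖s‖ / ‖z‖ := by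
  rw [← div_self hz.ne', ← sub_div, abs_div, abs_of_pos hz]
  gcongr
  simpa using abs_norm_sub_norm_le (z + s) z

theorem norm_inv_smul_rpow {E : Type*} [SeminormedAddCommGroup E] [NormedSpace ℝ E] {γ : ℝ}
    (hγ : 0 < γ) (v : E) (α : ℝ) : ‖γ⁻¹ • v‖ ^ α = γ ^ (-α) * ‖v‖ ^ α := by
  rw [norm_smul, Real.norm_of_nonneg (inv_nonneg.2 hγ.le),
    Real.mul_rpow (inv_nonneg.2 hγ.le) (norm_nonneg _), Real.inv_rpow hγ.le,
    Real.rpow_neg hγ.le]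

section Integrals

variable {Ω : Type*} [MeasurableSpace Ω] {μ : Measure Ω} {X : Ω → ℝ} {α : ℝ}

theorem integrable_rpowSpread_div (hα : 0 ≤ α) (hX0 : ∀ ω, 0 ≤ X ω) (hXm : AEMeasurable X μ)
    (hint : Integrable (fun ω ↦ (1 + X ω) ^ α) μ) {r : ℝ} (hr : 1 ≤ r) :
    Integrable (fun ω ↦ rpowSpread α (X ω / r)) μ :=
  hint.mono' ((measurable_rpowSpread α).comp_aemeasurable (hXm.div_const r)).aestronglyMeasurable
    (ae_of_all _ fun ω ↦ norm_rpowSpread_div_le hα (hX0 ω) hr)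

theorem tendsto_integral_rpowSpread_div_atTop (hα : 0 ≤ α) (hX0 : ∀ ω, 0 ≤ X ω)
    (hXm : AEMeasurable X μ) (hint : Integrable (fun ω ↦ (1 + X ω) ^ α) μ) :
    Tendsto (fun r ↦ ∫ ω, rpowSpread α (X ω / r) ∂μ) atTop (𝓝 0) := by
  have hdom : ∀ᶠ r in atTop, ∀ᵐ ω ∂μ, ‖rpowSpread α (X ω / r)‖ ≤ (1 + X ω) ^ α := by
    filter_upwards [eventually_ge_atTop 1] with r hr
    exact ae_of_all _ fun ω ↦ norm_rpowSpread_div_le hα (hX0 ω) hr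
  have hlim : ∀ᵐ ω ∂μ, Tendsto (fun r ↦ rpowSpread α (X ω / r)) atTop (𝓝 0) :=
    ae_of_all _ fun ω ↦
      (tendsto_rpowSpread_zero α).comp (tendsto_const_nhds.div_atTop tendsto_id)
  simpa using tendsto_integral_filter_of_dominated_convergence _
    (Eventually.of_forall fun r ↦
      ((measurable_rpowSpread α).comp_aemeasurable (hXm.div_const r)).aestronglyMeasurable)
    hdom hint hlim

variable {E : Type*} [SeminormedAddCommGroup E] {m : ℝ}

theorem integrable_rpow_neg_of_le [IsFiniteMeasure μ] {G : Ω → ℝ} (hm : 0 < m) (hα : 0 ≤ α)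
    (hG : AEMeasurable G μ) (hGm : ∀ ω, m ≤ G ω) : Integrable (fun ω ↦ G ω ^ (-α)) μ := by
  refine (integrable_const (m ^ (-α))).mono' (hG.pow_const _).aestronglyMeasurable
    (ae_of_all _ fun ω ↦ ?_)
  rw [Real.norm_of_nonneg (Real.rpow_nonneg (hm.le.trans (hGm ω)) _)]
  exact Real.rpow_le_rpow_of_nonpos hm (hGm ω) (neg_nonpos.2 hα)

theorem integrable_rpow_neg_mul_norm_add_rpow {G : Ω → ℝ} {S : Ω → E} (hm : 0 < m)
    (hα : 0 ≤ α) (hG : AEMeasurable G μ) (hGm : ∀ ω, m ≤ G ω) (hS : AEStronglyMeasurable S μ)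
    (hSX : ∀ᵐ ω ∂μ, ‖S ω‖ ≤ X ω) (hint : Integrable (fun ω ↦ (1 + X ω) ^ α) μ) {z : E}
    (hz : 1 ≤ ‖z‖) : Integrable (fun ω ↦ G ω ^ (-α) * ‖z + S ω‖ ^ α) μ := by
  have hmeas : AEStronglyMeasurable (fun ω ↦ G ω ^ (-α) * ‖z + S ω‖ ^ α) μ :=
    ((hG.pow_const _).mul
      ((aestronglyMeasurable_const.add hS).norm.aemeasurable.pow_const _)).aestronglyMeasurable
  refine (hint.const_mul (m ^ (-α) * ‖z‖ ^ α)).mono' hmeas ?_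
  filter_upwards [hSX] with ω hω
  have hG0 : 0 < G ω := hm.trans_le (hGm ω)
  have hnorm : ‖z + S ω‖ ≤ ‖z‖ * (1 + X ω) := by
    nlinarith [norm_add_le z (S ω), norm_nonneg (S ω)]
  rw [Real.norm_of_nonneg (by positivity), mul_assoc,
    ← Real.mul_rpow (by linarith) (by linarith [norm_nonneg (S ω)])]
  gcongr ?_ * ?_
  · exact Real.rpow_le_rpow_of_nonpos hm (hGm ω) (neg_nonpos.2 hα)
  · exact Real.rpow_le_rpow (norm_nonneg _) hnorm hα

variable [IsFiniteMeasure μ] [NormedSpace ℝ E]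

theorem abs_integral_norm_inv_smul_rpow_div_sub_le {G : Ω → ℝ} {S : Ω → E} (hm : 0 < m)
    (hα : 0 ≤ α) (hG : AEMeasurable G μ) (hGm : ∀ ω, m ≤ G ω) (hS : AEStronglyMeasurable S μ)
    (hSX : ∀ᵐ ω ∂μ, ‖S ω‖ ≤ X ω) (hX0 : ∀ ω, 0 ≤ X ω) (hXm : AEMeasurable X μ)
    (hint : Integrable (fun ω ↦ (1 + X ω) ^ α) μ) {z : E} (hz : 1 ≤ ‖z‖) :
    |(∫ ω, ‖(G ω)⁻¹ • (z + S ω)‖ ^ α ∂μ) / ‖z‖ ^ α - ∫ ω, G ω ^ (-α) ∂μ|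
      ≤ m ^ (-α) * ∫ ω, rpowSpread α (X ω / ‖z‖) ∂μ := by
  have hz0 : 0 < ‖z‖ := one_pos.trans_le hz
  have hG0 : ∀ ω, 0 < G ω := fun ω ↦ hm.trans_le (hGm ω)
  simp_rw [norm_inv_smul_rpow (hG0 _)]
  rw [← integral_div, ← integral_sub
      ((integrable_rpow_neg_mul_norm_add_rpow hm hα hG hGm hS hSX hint hz).div_const _)
      (integrable_rpow_neg_of_le hm hα hG hGm),
    ← integral_const_mul, ← Real.norm_eq_abs]
  refine norm_integral_le_of_norm_le
    ((integrable_rpowSpread_div hα hX0 hXm hint hz).const_mul _) ?_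
  filter_upwards [hSX] with ω hω
  have hsplit : G ω ^ (-α) * ‖z + S ω‖ ^ α / ‖z‖ ^ α - G ω ^ (-α)
      = G ω ^ (-α) * ((‖z + S ω‖ / ‖z‖) ^ α - 1) := by
    rw [Real.div_rpow (norm_nonneg _) hz0.le]; ring
  rw [hsplit, norm_mul, Real.norm_of_nonneg (Real.rpow_nonneg (hG0 ω).le _), Real.norm_eq_abs]
  gcongr ?_ * ?_
  · exact Real.rpow_le_rpow_of_nonpos hm (hGm ω) (neg_nonpos.2 hα)
  · exact abs_rpow_sub_one_le_rpowSpread hα (by positivity) <|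
      (abs_norm_add_div_norm_sub_one_le hz0 _).trans (by gcongr)

theorem tendsto_integral_norm_inv_smul_rpow_div_sub {G : E → Ω → ℝ} {S : E → Ω → E}
    (hm : 0 < m) (hα : 0 ≤ α) (hG : ∀ z, AEMeasurable (G z) μ) (hGm : ∀ z ω, m ≤ G z ω)
    (hS : ∀ z, AEStronglyMeasurable (S z) μ) (hSX : ∀ z, ∀ᵐ ω ∂μ, ‖S z ω‖ ≤ X ω)
    (hX0 : ∀ ω, 0 ≤ X ω) (hXm : AEMeasurable X μ) (hint : Integrable (fun ω ↦ (1 + X ω) ^ α) μ) :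
    Tendsto (fun z ↦ (∫ ω, ‖(G z ω)⁻¹ • (z + S z ω)‖ ^ α ∂μ) / ‖z‖ ^ α - ∫ ω, G z ω ^ (-α) ∂μ)
      (comap norm atTop) (𝓝 0) := by
  have hnorm : Tendsto (fun z : E ↦ ‖z‖) (comap norm atTop) atTop := tendsto_comap
  have hbound := ((tendsto_integral_rpowSpread_div_atTop hα hX0 hXm hint).comp hnorm).const_mul
    (m ^ (-α))
  rw [mul_zero] at hbound
  refine squeeze_zero_norm' ?_ hbound
  filter_upwards [hnorm.eventually_ge_atTop 1] with z hz
  exact abs_integral_norm_inv_smul_rpow_div_sub_le hm hα (hG z) (hGm z) (hS z) (hSX z) hX0 hXm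
    hint hz

end Integrals

theorem ratio_moment_tendsto_general {Ω : Type*} [MeasurableSpace Ω]
    (P : Measure Ω) [IsProbabilityMeasure P] (n mu : ℕ)
    (mΓ : ℝ) (hmΓ : 0 < mΓ)
    (Γ : (Fin mu → EuclideanSpace ℝ (Fin n)) → ℝ)
    (hΓcont : Continuous Γ) (hΓlb : ∀ v, mΓ ≤ Γ v)
    (w : Fin mu → ℝ)
    (A : EuclideanSpace ℝ (Fin n) → Ω → Fin mu → EuclideanSpace ℝ (Fin n))
    (hAmeas : ∀ z, Measurable (A z))
    (U : Ω → ℝ) (hU0 : ∀ ω, 0 ≤ U ω) (hUint : Integrable U P)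
    (hbound : ∀ z, ∀ᵐ ω ∂P,
      ‖∑ i, w i • A z ω i‖ ≤ Real.sqrt (∑ i, w i ^ 2) * U ω)
    (α : ℝ) (hα : 0 < α)
    (hαint : Integrable (fun ω => (1 + Real.sqrt (∑ i, w i ^ 2) * U ω) ^ α) P) :
    Tendsto
      (fun z : EuclideanSpace ℝ (Fin n) =>
        (∫ ω, ‖(Γ (A z ω))⁻¹ • (z + ∑ i, w i • A z ω i)‖ ^ α ∂P) / ‖z‖ ^ α
          - ∫ ω, (Γ (A z ω)) ^ (-α : ℝ) ∂P)
      (comap norm atTop) (nhds 0) :=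
  tendsto_integral_norm_inv_smul_rpow_div_sub hmΓ hα.le
    (fun z ↦ (hΓcont.measurable.comp (hAmeas z)).aemeasurable) (fun _ _ ↦ hΓlb _)
    (fun z ↦ by fun_prop) hbound (fun ω ↦ mul_nonneg (Real.sqrt_nonneg _) (hU0 ω))
    (hUint.aemeasurable.const_mul _) hαint

/-- The key dominated-convergence step: with `Γ` continuous and bounded below by
`m_Γ > 0`, `Z₁(z) = (z + ∑ᵢ wᵢ A(z)ᵢ)/Γ(A(z))` and
`‖∑ᵢ wᵢ A(z)ᵢ‖ ≤ ‖w‖ ‖U‖` a.s. for an integrable `‖U‖ ≥ 0` (with the relevant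
power integrable), for every `α > 0`,
`E[‖Z₁(z)‖^α]/‖z‖^α − E[Γ(A(z))^{−α}] → 0` as `‖z‖ → ∞`. -/
theorem ratio_moment_tendsto {Ω : Type*} [MeasurableSpace Ω]
    (P : Measure Ω) [IsProbabilityMeasure P] (n mu : ℕ)
    (mΓ : ℝ) (hmΓ : 0 < mΓ)
    (Γ : (Fin mu → EuclideanSpace ℝ (Fin n)) → ℝ)
    (hΓcont : Continuous Γ) (hΓlb : ∀ v, mΓ ≤ Γ v)
    (w : Fin mu → ℝ) (hw : w ≠ 0)
    (A : EuclideanSpace ℝ (Fin n) → Ω → Fin mu → EuclideanSpace ℝ (Fin n))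
    (hAmeas : ∀ z, Measurable (A z))
    (U : Ω → ℝ) (hU0 : ∀ ω, 0 ≤ U ω) (hUint : Integrable U P)
    (hbound : ∀ z, ∀ᵐ ω ∂P,
      ‖∑ i, w i • A z ω i‖ ≤ Real.sqrt (∑ i, w i ^ 2) * U ω)
    (α : ℝ) (hα : 0 < α)
    (hαint : Integrable (fun ω => (1 + Real.sqrt (∑ i, w i ^ 2) * U ω) ^ α) P) :
    Tendsto
      (fun z : EuclideanSpace ℝ (Fin n) =>
        (∫ ω, ‖(Γ (A z ω))⁻¹ • (z + ∑ i, w i • A z ω i)‖ ^ α ∂P) / ‖z‖ ^ α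
          - ∫ ω, (Γ (A z ω)) ^ (-α : ℝ) ∂P)
      (comap norm atTop) (nhds 0) :=
  ratio_moment_tendsto_general P n mu mΓ hmΓ Γ hΓcont hΓlb w A hAmeas U hU0 hUint hbound α hα hαint
end
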